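/- Fix n, p, T, a positive definite Σ, B* ∈ ℝ^{p×T}, E ∈ ℝ^{n×T}, λ ≥ 0, τ = 0, and constants c ∈ (0,1), η > 0. For Z ∈ ℝ^{n×p} let X = ZΣ^{1/2}, Y = XB* + E, B̂(Z) the multi-task group Lasso solution, H(Z) = Σ^{1/2}(B̂(Z) − B*), F(Z) = Y − XB̂(Z), and D(Z) = (‖H(Z)‖_F² + ‖F(Z)‖_F²/n)^{1/2} > 0. Let Z, Z̄ be such that both B̂(Z) and B̂(Z̄) have at most n(1−c)/2 nonzero rows, and both X = ZΣ^{1/2} and X̄ = Z̄Σ^{1/2} satisfy ‖Xb‖² > η n ‖Σ^{1/2}b‖² for every nonzero b ∈ ℝ^p with at most (1−c)n nonzero entries. Then: (1) (1/√n)‖F(Z)/D(Z) − F(Z̄)/D(Z̄)‖_F ≤ n^{−1/2}·L·‖Z − Z̄‖_op with L = 8 max(1,(2η)^{−1}); and (2) if additionally ‖Z‖_op < 2√n + √p and ‖Z̄‖_op < 2√n + √p, then ‖(1/n)ZᵀF(Z)/D(Z) − (1/n)Z̄ᵀF(Z̄)/D(Z̄)‖_op ≤ n^{−1/2}·(1 +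 (2 + √(p/n))·L)·‖Z − Z̄‖_op. -/

import Mathlib

/-!
Write `X = ZΣ^{1/2}`, `F = Y - XB̂`, `H = Σ^{1/2}(B̂ - B*)` and `Δ = B̂(Z) - B̂(Z̄)`. Adding the
first-order optimality conditions of the two Lasso problems cancels the penalty and gives
`⟨F(Z̄), X̄Δ⟩ ≤ ⟨F(Z), XΔ⟩`. Since `F(Z̄) - F(Z) = X̄Δ + (Z - Z̄)H(Z)`, this yields
`‖X̄Δ‖² ≤ ‖Z - Z̄‖ (‖F(Z)‖ ‖Σ^{1/2}Δ‖ + ‖H(Z)‖ ‖X̄Δ‖)`. The matrix `Δ` has at most `(1 - c)n`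
nonzero rows, so the restricted eigenvalue condition for `X̄` gives `√(ηn) ‖Σ^{1/2}Δ‖ ≤ ‖X̄Δ‖`,
and Cauchy–Schwarz turns the previous bound into `‖X̄Δ‖ ≤ √(1 + 1/η) ‖Z - Z̄‖ D(Z)`. The bounds
on `‖F(Z) - F(Z̄)‖`, on `|D(Z) - D(Z̄)|` and on the difference of the normalised residuals follow
by triangle inequalities; the second claim only adds `‖Zᵀ‖ ≤ 2√n + √p`.
-/

open MeasureTheory ProbabilityTheory Matrix Filter
open scoped BigOperators Kronecker NNReal ENNReal

noncomputable section

namespace MTS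

instance matMeasurableSpace {a b : Type*} : MeasurableSpace (Matrix a b ℝ) :=
  inferInstanceAs (MeasurableSpace (a → b → ℝ))

instance matNormedAddCommGroup {a b : Type*} [Fintype a] [Fintype b] :
    NormedAddCommGroup (Matrix a b ℝ) :=
  inferInstanceAs (NormedAddCommGroup (a → b → ℝ))

instance matNormedSpace {a b : Type*} [Fintype a] [Fintype b] :
    NormedSpace ℝ (Matrix a b ℝ) :=
  inferInstanceAs (NormedSpace ℝ (a → b → ℝ))

instance matMeasureSpace {a b : Type*} [Fintype a] [Fintype b] :
    MeasureSpace (Matrix a b ℝ) :=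
  inferInstanceAs (MeasureSpace (a → b → ℝ))

/-- Squared Frobenius norm of a matrix. -/
def frobSq {a b : Type*} [Fintype a] [Fintype b] (A : Matrix a b ℝ) : ℝ :=
  ∑ i, ∑ j, A i j ^ 2

/-- Frobenius norm of a matrix. -/
def frob {a b : Type*} [Fintype a] [Fintype b] (A : Matrix a b ℝ) : ℝ :=
  Real.sqrt (frobSq A)

/-- ℓ2-operator norm of a matrix. -/
def opNorm {a b : Type*} [Fintype a] [Fintype b] [DecidableEq b] (A : Matrix a b ℝ) : ℝ :=
  ‖LinearMap.toContinuousLinearMap (Matrix.toEuclideanLin A)‖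

open Classical in
def matSqrt {p : ℕ} (A : Matrix (Fin p) (Fin p) ℝ) : Matrix (Fin p) (Fin p) ℝ :=
  if h : A.PosSemidef then
    (h.1.eigenvectorUnitary : Matrix (Fin p) (Fin p) ℝ) * Matrix.diagonal (Real.sqrt ∘ h.1.eigenvalues) *
      (star h.1.eigenvectorUnitary : Matrix (Fin p) (Fin p) ℝ) else 0

/-- Nuclear norm of a square matrix. -/
def nucNorm {T : ℕ} (A : Matrix (Fin T) (Fin T) ℝ) : ℝ :=
  (matSqrt (Aᵀ * A)).trace

open Classical in
def pinv {N : Type*} [Fintype N] [DecidableEq N] (M : Matrix N N ℝ) : Matrix N N ℝ :=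
  if h : ∃ G : Matrix N N ℝ,
      M * G * M = M ∧ G * M * G = G ∧ (M * G)ᵀ = M * G ∧ (G * M)ᵀ = G * M
  then h.choose else 0

/-- The ℓ_{2,1} norm of a matrix: sum of the Euclidean norms of its rows. -/
def norm21 {p T : ℕ} (B : Matrix (Fin p) (Fin T) ℝ) : ℝ :=
  ∑ j, Real.sqrt (∑ t, B j t ^ 2)

/-- The multi-task elastic-net objective function. -/
def objective {p T : ℕ} (n : ℕ) (lam tau : ℝ) (Y : Matrix (Fin n) (Fin T) ℝ)
    (X : Matrix (Fin n) (Fin p) ℝ) (B : Matrix (Fin p) (Fin T) ℝ) : ℝ :=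
  (1 / (2 * (n : ℝ))) * frobSq (Y - X * B) + lam * norm21 B + (tau / 2) * frobSq B

open Classical in
def nnzRows {p T : ℕ} (B : Matrix (Fin p) (Fin T) ℝ) : ℕ :=
  (Finset.univ.filter fun j => B j ≠ 0).card

open Classical in
def nnzVec {p : ℕ} (b : Fin p → ℝ) : ℕ :=
  (Finset.univ.filter fun j => b j ≠ 0).card

open Classical in
def rowHess {T : ℕ} (lam : ℝ) (r : Fin T → ℝ) : Matrix (Fin T) (Fin T) ℝ :=
  if r = 0 then 0
  else (lam * (Real.sqrt (∑ t, r t ^ 2))⁻¹) •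
    ((1 : Matrix (Fin T) (Fin T) ℝ) - (∑ t, r t ^ 2)⁻¹ • Matrix.vecMulVec r r)

open Classical in
def Psupp {p T : ℕ} (B : Matrix (Fin p) (Fin T) ℝ) : Matrix (Fin p) (Fin p) ℝ :=
  Matrix.of fun j k => if j = k ∧ B j ≠ 0 then (1 : ℝ) else 0

open Classical in
def Xsupp {n p T : ℕ} (X : Matrix (Fin n) (Fin p) ℝ) (B : Matrix (Fin p) (Fin T) ℝ) :
    Matrix (Fin n) (Fin p) ℝ :=
  Matrix.of fun i j => if B j ≠ 0 then X i j else 0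

/-- The matrix `M = I_T ⊗ (X_ŜᵀX_Ŝ + τ n P_Ŝ) + n Σ_{k ∈ Ŝ} (H^{(k)} ⊗ e_k e_kᵀ)`. -/
def Mmat {p T : ℕ} (n : ℕ) (lam tau : ℝ) (X : Matrix (Fin n) (Fin p) ℝ)
    (B : Matrix (Fin p) (Fin T) ℝ) : Matrix (Fin T × Fin p) (Fin T × Fin p) ℝ :=
  (1 : Matrix (Fin T) (Fin T) ℝ) ⊗ₖ ((Xsupp X B)ᵀ * Xsupp X B + (tau * n) • Psupp B)
    + (n : ℝ) • ∑ k : Fin p, (rowHess lam (B k)) ⊗ₖ (Matrix.single k k (1 : ℝ))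

/-- The interaction matrix `Â = Σ_i (I_T ⊗ e_iᵀX) M† (I_T ⊗ Xᵀe_i)`, written entrywise:
`Â_{t,t'} = Σ_i Σ_j Σ_j' X_{ij} (M†)_{(t,j),(t',j')} X_{ij'}`. -/
def Amat {p T : ℕ} (n : ℕ) (lam tau : ℝ) (X : Matrix (Fin n) (Fin p) ℝ)
    (B : Matrix (Fin p) (Fin T) ℝ) : Matrix (Fin T) (Fin T) ℝ :=
  Matrix.of fun t t' => ∑ i : Fin n, ∑ j : Fin p, ∑ j' : Fin p,
    X i j * pinv (Mmat n lam tau X B) (t, j) (t', j') * X i j'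

/-- The proposed noise covariance estimator `Ŝ`. -/
def Scov {p T : ℕ} (n : ℕ) (lam tau : ℝ) (Sig : Matrix (Fin p) (Fin p) ℝ)
    (X : Matrix (Fin n) (Fin p) ℝ) (Y : Matrix (Fin n) (Fin T) ℝ)
    (B : Matrix (Fin p) (Fin T) ℝ) : Matrix (Fin T) (Fin T) ℝ :=
  ((n : ℝ) • (1 : Matrix (Fin T) (Fin T) ℝ) - Amat n lam tau X B)⁻¹ *
    ((Y - X * B)ᵀ * ((((p : ℝ) + (n : ℝ)) • (1 : Matrix (Fin n) (Fin n) ℝ))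
        - X * Sig⁻¹ * Xᵀ) * (Y - X * B)
      - Amat n lam tau X B * ((Y - X * B)ᵀ * (Y - X * B))
      - ((Y - X * B)ᵀ * (Y - X * B)) * Amat n lam tau X B) *
    ((n : ℝ) • (1 : Matrix (Fin T) (Fin T) ℝ) - Amat n lam tau X B)⁻¹

/-- A random vector is centered Gaussian with covariance `S`: every linear functional of it
is a centered real Gaussian with the corresponding variance. -/
def IsGaussianVec {Ω : Type*} [MeasurableSpace Ω] (P : Measure Ω) {T : ℕ}
    (v : Ω → Fin T → ℝ) (S : Matrix (Fin T) (Fin T) ℝ) : Prop :=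
  ∀ a : Fin T → ℝ,
    Measure.map (fun ω => ∑ t, a t * v ω t) P =
      gaussianReal 0 (Real.toNNReal (a ⬝ᵥ S.mulVec a))

/-- The rows of the random matrix `M` are i.i.d. centered Gaussian vectors with
covariance `S`. -/
def IIDGaussianRows {Ω : Type*} [MeasurableSpace Ω] (P : Measure Ω) {n T : ℕ}
    (M : Ω → Matrix (Fin n) (Fin T) ℝ) (S : Matrix (Fin T) (Fin T) ℝ) : Prop :=
  (∀ i j, Measurable fun ω => M ω i j) ∧
    iIndepFun (fun i ω => M ω i) P ∧
    ∀ i, IsGaussianVec P (fun ω => M ω i) S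

/-- All the assumptions of the multi-task linear model with multi-task elastic-net
estimator `Bhat`. -/
structure ModelHyps {n p T : ℕ} {Ω : Type*} [MeasurableSpace Ω] (P : Measure Ω)
    (Sig : Matrix (Fin p) (Fin p) ℝ) (S : Matrix (Fin T) (Fin T) ℝ)
    (Bstar : Matrix (Fin p) (Fin T) ℝ)
    (X : Ω → Matrix (Fin n) (Fin p) ℝ) (E : Ω → Matrix (Fin n) (Fin T) ℝ)
    (lam tau : ℝ) (Bhat : Ω → Matrix (Fin p) (Fin T) ℝ) : Prop where
  prob : IsProbabilityMeasure P
  hn : 0 < n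
  hp : 0 < p
  hT : 0 < T
  hSig : Sig.PosDef
  hS : S.PosSemidef
  hX : IIDGaussianRows P X Sig
  hE : IIDGaussianRows P E S
  indep : IndepFun X E P
  hlam : 0 ≤ lam
  htau : 0 ≤ tau
  hBhat_meas : Measurable Bhat
  hBhat_min : ∀ ω B, objective n lam tau (X ω * Bstar + E ω) (X ω) (Bhat ω)
      ≤ objective n lam tau (X ω * Bstar + E ω) (X ω) B

/-- The event `U₁` that `B̂` has at most `n(1-c)/2` nonzero rows. -/
def U1set {p T : ℕ} {Ω : Type*} (Bhat : Ω → Matrix (Fin p) (Fin T) ℝ) (n : ℕ) (c : ℝ) :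
    Set Ω :=
  {ω | (nnzRows (Bhat ω) : ℝ) ≤ (n : ℝ) * (1 - c) / 2}

/-- Smallest eigenvalue of a symmetric matrix (junk value `0` otherwise). -/
def eigMin {p : ℕ} (A : Matrix (Fin p) (Fin p) ℝ) : ℝ :=
  if h : A.IsHermitian then ⨅ i, h.eigenvalues i else 0


/-- Residual matrix `F = Y - XB` with `Y = XB* + E`. -/
def resid {n p T : ℕ} (Bstar : Matrix (Fin p) (Fin T) ℝ) (X : Matrix (Fin n) (Fin p) ℝ)
    (E : Matrix (Fin n) (Fin T) ℝ) (B : Matrix (Fin p) (Fin T) ℝ) :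
    Matrix (Fin n) (Fin T) ℝ :=
  X * Bstar + E - X * B

/-- Error matrix `H = Σ^{1/2}(B - B*)`. -/
def herr {p T : ℕ} (Sig : Matrix (Fin p) (Fin p) ℝ) (Bstar B : Matrix (Fin p) (Fin T) ℝ) :
    Matrix (Fin p) (Fin T) ℝ :=
  matSqrt Sig * (B - Bstar)

/-- The matrix `I_T - Â/n`. -/
def ImA {p T : ℕ} (n : ℕ) (lam tau : ℝ) (X : Matrix (Fin n) (Fin p) ℝ)
    (B : Matrix (Fin p) (Fin T) ℝ) : Matrix (Fin T) (Fin T) ℝ :=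
  (1 : Matrix (Fin T) (Fin T) ℝ) - (n : ℝ)⁻¹ • Amat n lam tau X B

/-- Residual as a function of `Z`, where `X = ZΣ^{1/2}` and `Y = XB* + E`. -/
def Fz {n p T : ℕ} (Sig : Matrix (Fin p) (Fin p) ℝ) (Bstar : Matrix (Fin p) (Fin T) ℝ)
    (E : Matrix (Fin n) (Fin T) ℝ) (Z : Matrix (Fin n) (Fin p) ℝ)
    (B : Matrix (Fin p) (Fin T) ℝ) : Matrix (Fin n) (Fin T) ℝ :=
  Z * matSqrt Sig * Bstar + E - Z * matSqrt Sig * B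

/-- `D(Z) = (‖H(Z)‖_F² + ‖F(Z)‖_F²/n)^{1/2}`. -/
def Dz {n p T : ℕ} (Sig : Matrix (Fin p) (Fin p) ℝ) (Bstar : Matrix (Fin p) (Fin T) ℝ)
    (E : Matrix (Fin n) (Fin T) ℝ) (Z : Matrix (Fin n) (Fin p) ℝ)
    (B : Matrix (Fin p) (Fin T) ℝ) : ℝ :=
  Real.sqrt (frob (herr Sig Bstar B) ^ 2 + frob (Fz Sig Bstar E Z B) ^ 2 / (n : ℝ))

/-- The distribution of an `n × p` random matrix with i.i.d. standard Gaussian entries. -/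
def stdGaussMat (n p : ℕ) : Measure (Matrix (Fin n) (Fin p) ℝ) :=
  Measure.pi fun _ : Fin n => Measure.pi fun _ : Fin p => gaussianReal 0 1

/-- The method-of-moments estimator of the noise covariance. -/
def SmmEst {T : ℕ} (n p : ℕ) (Sig : Matrix (Fin p) (Fin p) ℝ)
    (X : Matrix (Fin n) (Fin p) ℝ) (Y : Matrix (Fin n) (Fin T) ℝ) :
    Matrix (Fin T) (Fin T) ℝ :=
  (((n : ℝ) + 1 + (p : ℝ)) / ((n : ℝ) * ((n : ℝ) + 1))) • (Yᵀ * Y)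
    - (1 / ((n : ℝ) * ((n : ℝ) + 1))) • (Yᵀ * X * Sig⁻¹ * Xᵀ * Y)

open scoped RealInnerProductSpace Topology

lemma transpose_mul_apply_eq_mulVec {a b c : Type*} [Fintype b] (A : Matrix a b ℝ)
    (B : Matrix b c ℝ) (t : c) : (A * B)ᵀ t = A *ᵥ Bᵀ t := by
  ext i; simp [Matrix.mul_apply, Matrix.mulVec, dotProduct]

section MatrixNorms

variable {a b c : Type*} [Fintype a] [Fintype b] [Fintype c]

-- The norm instance on `Matrix` declared above is the entrywise sup norm, so the Frobenius norm is
-- taken as the Euclidean norm of the flattened matrix.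
def flat : Matrix a b ℝ →ₗ[ℝ] EuclideanSpace ℝ (a × b) where
  toFun A := WithLp.toLp 2 fun ij => A ij.1 ij.2
  map_add' _ _ := rfl
  map_smul' _ _ := rfl

lemma norm_toLp_sq (x : a → ℝ) : ‖WithLp.toLp 2 x‖ ^ 2 = ∑ i, x i ^ 2 := by
  simp [EuclideanSpace.norm_sq_eq]

lemma norm_flat_sq (A : Matrix a b ℝ) : ‖flat A‖ ^ 2 = ∑ i, ∑ j, A i j ^ 2 := by
  rw [EuclideanSpace.norm_sq_eq, Fintype.sum_prod_type]
  simp only [Real.norm_eq_abs, sq_abs]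
  rfl

lemma frob_eq_norm_flat (A : Matrix a b ℝ) : frob A = ‖flat A‖ := by
  rw [frob, frobSq, ← norm_flat_sq, Real.sqrt_sq (norm_nonneg _)]

lemma norm_flat_sq_eq_sum_row (A : Matrix a b ℝ) :
    ‖flat A‖ ^ 2 = ∑ i, ‖WithLp.toLp 2 (A i)‖ ^ 2 := by
  simp only [norm_flat_sq, norm_toLp_sq]

lemma norm_flat_sq_eq_sum_col (A : Matrix a b ℝ) :
    ‖flat A‖ ^ 2 = ∑ j, ‖WithLp.toLp 2 (Aᵀ j)‖ ^ 2 := by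
  simp only [norm_flat_sq, norm_toLp_sq, Matrix.transpose_apply]
  exact Finset.sum_comm

variable [DecidableEq b]

lemma opNorm_nonneg (A : Matrix a b ℝ) : 0 ≤ opNorm A := norm_nonneg _

lemma opNorm_add_le (A B : Matrix a b ℝ) : opNorm (A + B) ≤ opNorm A + opNorm B := by
  simp only [opNorm, map_add]
  exact norm_add_le _ _

lemma opNorm_smul (r : ℝ) (A : Matrix a b ℝ) : opNorm (r • A) = |r| * opNorm A := by
  simp only [opNorm, map_smul, norm_smul, Real.norm_eq_abs]

-- `opNorm` is definitionally the norm of `Matrix.instL2OpNormedAddCommGroup`.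
lemma opNorm_mul_le [DecidableEq a] [DecidableEq c] (A : Matrix a b ℝ) (B : Matrix b c ℝ) :
    opNorm (A * B) ≤ opNorm A * opNorm B :=
  letI := @Matrix.instL2OpNormedAddCommGroup ℝ a c _ _ _ _
  letI := @Matrix.instL2OpNormedAddCommGroup ℝ a b _ _ _ _
  letI := @Matrix.instL2OpNormedAddCommGroup ℝ b c _ _ _ _
  Matrix.l2_opNorm_mul A B

lemma opNorm_transpose [DecidableEq a] (A : Matrix a b ℝ) : opNorm Aᵀ = opNorm A :=
  letI := @Matrix.instL2OpNormedAddCommGroup ℝ a b _ _ _ _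
  letI := @Matrix.instL2OpNormedAddCommGroup ℝ b a _ _ _ _
  Matrix.l2_opNorm_conjTranspose A

lemma norm_toLp_mulVec_le (A : Matrix a b ℝ) (x : b → ℝ) :
    ‖WithLp.toLp 2 (A *ᵥ x)‖ ≤ opNorm A * ‖WithLp.toLp 2 x‖ :=
  (LinearMap.toContinuousLinearMap (Matrix.toEuclideanLin A)).le_opNorm (WithLp.toLp 2 x)

lemma norm_flat_mul_le (A : Matrix a b ℝ) (B : Matrix b c ℝ) :
    ‖flat (A * B)‖ ≤ opNorm A * ‖flat B‖ := by
  refine le_of_sq_le_sq ?_ (mul_nonneg (opNorm_nonneg A) (norm_nonneg _))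
  rw [mul_pow, norm_flat_sq_eq_sum_col, norm_flat_sq_eq_sum_col, Finset.mul_sum]
  refine Finset.sum_le_sum fun t _ => ?_
  rw [transpose_mul_apply_eq_mulVec, ← mul_pow]
  exact pow_le_pow_left₀ (norm_nonneg _) (norm_toLp_mulVec_le A _) 2

lemma opNorm_le_norm_flat (A : Matrix a b ℝ) : opNorm A ≤ ‖flat A‖ := by
  refine ContinuousLinearMap.opNorm_le_bound _ (norm_nonneg _) fun x => ?_
  obtain ⟨x, rfl⟩ : ∃ y, x = WithLp.toLp 2 y := ⟨x.ofLp, rfl⟩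
  refine le_of_sq_le_sq ?_ (by positivity)
  change ‖WithLp.toLp 2 (A *ᵥ x)‖ ^ 2 ≤ _
  rw [mul_pow, norm_flat_sq_eq_sum_row, Finset.sum_mul, norm_toLp_sq]
  refine Finset.sum_le_sum fun i _ => ?_
  rw [norm_toLp_sq, norm_toLp_sq]
  exact Finset.sum_mul_sq_le_sq_mul_sq _ _ _

lemma opNorm_transpose_mul_sub_le [DecidableEq a] [DecidableEq c] (Z Zb : Matrix a b ℝ)
    (G₁ G₂ : Matrix a c ℝ) :
    opNorm (Zᵀ * G₁ - Zbᵀ * G₂) ≤ opNorm Z * ‖flat (G₁ - G₂)‖ + opNorm (Z - Zb) * ‖flat G₂‖ := by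
  have hsplit : Zᵀ * G₁ - Zbᵀ * G₂ = Zᵀ * (G₁ - G₂) + (Z - Zb)ᵀ * G₂ := by
    rw [Matrix.mul_sub, Matrix.transpose_sub, Matrix.sub_mul]
    abel
  have hbound : ∀ (A : Matrix a b ℝ) (G : Matrix a c ℝ), opNorm (Aᵀ * G) ≤ opNorm A * ‖flat G‖ :=
    fun A G => (opNorm_mul_le _ _).trans <| by
      rw [opNorm_transpose]
      exact mul_le_mul_of_nonneg_left (opNorm_le_norm_flat G) (opNorm_nonneg A)
  rw [hsplit]
  exact (opNorm_add_le _ _).trans (add_le_add (hbound _ _) (hbound _ _))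

end MatrixNorms

theorem inner_residual_add_sub_nonneg_of_minimizer {V W : Type*} [AddCommGroup V] [Module ℝ V]
    [NormedAddCommGroup W] [InnerProductSpace ℝ W] (A : V →ₗ[ℝ] W) (y : W) {h : V → ℝ}
    (hh : ConvexOn ℝ Set.univ h) {x₀ : V}
    (hmin : ∀ x, ‖y - A x₀‖ ^ 2 / 2 + h x₀ ≤ ‖y - A x‖ ^ 2 / 2 + h x) (x : V) :
    0 ≤ ⟪y - A x₀, A (x₀ - x)⟫ + (h x - h x₀) := by
  set r := y - A x₀
  set d := A (x₀ - x)
  have hseg : ∀ t ∈ Set.Ioc (0 : ℝ) 1, 0 ≤ ⟪r, d⟫ + (h x - h x₀) + t * (‖d‖ ^ 2 / 2) := by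
    rintro t ⟨ht0, ht1⟩
    have hconv : h ((1 - t) • x₀ + t • x) ≤ (1 - t) * h x₀ + t * h x :=
      hh.2 (Set.mem_univ _) (Set.mem_univ _) (sub_nonneg.2 ht1) ht0.le (by ring)
    have hres : y - A ((1 - t) • x₀ + t • x) = r + t • d := by
      simp only [r, d, map_add, map_sub, map_smul]
      module
    have hval := hmin ((1 - t) • x₀ + t • x)
    have hexp : ‖r + t • d‖ ^ 2 = ‖r‖ ^ 2 + 2 * t * ⟪r, d⟫ + t ^ 2 * ‖d‖ ^ 2 := by
      rw [norm_add_sq_real, inner_smul_right, norm_smul, Real.norm_of_nonneg ht0.le]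
      ring
    rw [hres, hexp] at hval
    have : 0 ≤ t * (⟪r, d⟫ + (h x - h x₀) + t * (‖d‖ ^ 2 / 2)) := by nlinarith
    exact nonneg_of_mul_nonneg_right this ht0
  refine ge_of_tendsto ?_ (eventually_of_mem (Ioc_mem_nhdsGT zero_lt_one) hseg)
  have hcont : Continuous fun t : ℝ => ⟪r, d⟫ + (h x - h x₀) + t * (‖d‖ ^ 2 / 2) := by fun_prop
  simpa using (hcont.tendsto 0).mono_left nhdsWithin_le_nhds

section Lasso

variable {n p T : ℕ}

def leftMul (X : Matrix (Fin n) (Fin p) ℝ) :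
    Matrix (Fin p) (Fin T) ℝ →ₗ[ℝ] Matrix (Fin n) (Fin T) ℝ where
  toFun B := X * B
  map_add' := Matrix.mul_add X
  map_smul' r B := Matrix.mul_smul X r B

lemma norm21_eq_sum_norm (B : Matrix (Fin p) (Fin T) ℝ) :
    norm21 B = ∑ j, ‖WithLp.toLp 2 (B j)‖ := by
  simp only [norm21, EuclideanSpace.norm_eq, Real.norm_eq_abs, sq_abs]

lemma convexOn_norm21 : ConvexOn ℝ Set.univ (norm21 : Matrix (Fin p) (Fin T) ℝ → ℝ) := by
  refine ⟨convex_univ, fun B _ B' _ s t hs ht _ => ?_⟩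
  simp only [norm21_eq_sum_norm, smul_eq_mul, Finset.mul_sum, ← Finset.sum_add_distrib]
  refine Finset.sum_le_sum fun j _ => ?_
  calc ‖WithLp.toLp 2 ((s • B + t • B') j)‖
      = ‖s • WithLp.toLp 2 (B j) + t • WithLp.toLp 2 (B' j)‖ := rfl
    _ ≤ s * ‖WithLp.toLp 2 (B j)‖ + t * ‖WithLp.toLp 2 (B' j)‖ := by
      refine (norm_add_le _ _).trans_eq ?_
      rw [norm_smul, norm_smul, Real.norm_of_nonneg hs, Real.norm_of_nonneg ht]

lemma objective_zero_eq_norm_flat (hn : 0 < n) (lam : ℝ) (Y : Matrix (Fin n) (Fin T) ℝ)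
    (X : Matrix (Fin n) (Fin p) ℝ) (B : Matrix (Fin p) (Fin T) ℝ) :
    objective n lam 0 Y X B
      = (n : ℝ)⁻¹ * (‖flat (Y - X * B)‖ ^ 2 / 2 + n * lam * norm21 B) := by
  have : (n : ℝ) ≠ 0 := by positivity
  rw [objective, norm_flat_sq, ← frobSq]
  field_simp
  ring

lemma inner_residual_add_norm21_sub_nonneg (hn : 0 < n) {lam : ℝ} (hlam : 0 ≤ lam)
    {Y : Matrix (Fin n) (Fin T) ℝ} {X : Matrix (Fin n) (Fin p) ℝ} {B₀ : Matrix (Fin p) (Fin T) ℝ}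
    (hmin : ∀ B, objective n lam 0 Y X B₀ ≤ objective n lam 0 Y X B)
    (B : Matrix (Fin p) (Fin T) ℝ) :
    0 ≤ ⟪flat (Y - X * B₀), flat (X * (B₀ - B))⟫ + n * lam * (norm21 B - norm21 B₀) := by
  set A := flat ∘ₗ leftMul (T := T) X
  have hres : ∀ B, flat Y - A B = flat (Y - X * B) := fun B => (map_sub _ _ _).symm
  have hconv : ConvexOn ℝ Set.univ fun B : Matrix (Fin p) (Fin T) ℝ => n * lam * norm21 B :=
    convexOn_norm21.smul (by positivity)
  have hmin' : ∀ B, ‖flat Y - A B₀‖ ^ 2 / 2 + n * lam * norm21 B₀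
      ≤ ‖flat Y - A B‖ ^ 2 / 2 + n * lam * norm21 B := fun B => by
    have h := hmin B
    rw [objective_zero_eq_norm_flat hn, objective_zero_eq_norm_flat hn] at h
    rw [hres, hres]
    exact le_of_mul_le_mul_left h (by positivity)
  have key := inner_residual_add_sub_nonneg_of_minimizer A (flat Y) hconv hmin' B
  rwa [hres, ← mul_sub] at key

lemma inner_le_inner_of_lasso_minimizers (hn : 0 < n) {lam : ℝ} (hlam : 0 ≤ lam)
    {Y₁ Y₂ : Matrix (Fin n) (Fin T) ℝ} {X₁ X₂ : Matrix (Fin n) (Fin p) ℝ}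
    {B₁ B₂ : Matrix (Fin p) (Fin T) ℝ}
    (h₁ : ∀ B, objective n lam 0 Y₁ X₁ B₁ ≤ objective n lam 0 Y₁ X₁ B)
    (h₂ : ∀ B, objective n lam 0 Y₂ X₂ B₂ ≤ objective n lam 0 Y₂ X₂ B) :
    ⟪flat (Y₂ - X₂ * B₂), flat (X₂ * (B₁ - B₂))⟫
      ≤ ⟪flat (Y₁ - X₁ * B₁), flat (X₁ * (B₁ - B₂))⟫ := by
  have e₁ := inner_residual_add_norm21_sub_nonneg hn hlam h₁ B₂
  have e₂ := inner_residual_add_norm21_sub_nonneg hn hlam h₂ B₁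
  rw [← neg_sub B₁ B₂, Matrix.mul_neg, map_neg, inner_neg_right] at e₂
  linarith

end Lasso

lemma abs_sqrt_sq_add_sq_div_sub_le {n : ℝ} (hn : 0 < n) (a₁ a₂ f₁ f₂ : ℝ) :
    |√(a₁ ^ 2 + f₁ ^ 2 / n) - √(a₂ ^ 2 + f₂ ^ 2 / n)| ≤ |a₁ - a₂| + |f₁ - f₂| / √n := by
  have hz : ∀ a f : ℝ, √(a ^ 2 + f ^ 2 / n) = ‖(⟨a, f / √n⟩ : ℂ)‖ := fun a f => by
    rw [Complex.norm_eq_sqrt_sq_add_sq, div_pow, Real.sq_sqrt hn.le]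
  rw [hz, hz]
  refine (abs_norm_sub_norm_le _ _).trans ((Complex.norm_le_abs_re_add_abs_im _).trans_eq ?_)
  simp [← sub_div, abs_div, abs_of_pos (Real.sqrt_pos.2 hn)]

lemma le_sqrt_mul_sqrt_sq_add_sq_div {n : ℝ} (hn : 0 < n) (a f : ℝ) :
    f ≤ √n * √(a ^ 2 + f ^ 2 / n) := by
  rw [← Real.sqrt_mul hn.le]
  refine (le_abs_self f).trans (Real.abs_le_sqrt ?_)
  rw [mul_add, mul_div_cancel₀ _ hn.ne']
  nlinarith [sq_nonneg a]

lemma add_mul_le_sqrt_one_add_sq_mul_sqrt (a b s : ℝ) :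
    a + s * b ≤ √(1 + s ^ 2) * √(a ^ 2 + b ^ 2) := by
  rw [← Real.sqrt_mul (by positivity)]
  exact (le_abs_self _).trans (Real.abs_le_sqrt (by nlinarith [sq_nonneg (s * a - b)]))

lemma sqrt_mul_le_of_mul_sq_le {n η u v : ℝ} (hn : 0 ≤ n) (hη : 0 < η) (hu : 0 ≤ u)
    (hre : η * n * v ^ 2 ≤ u ^ 2) : √n * v ≤ √η⁻¹ * u := by
  refine (le_abs_self _).trans (abs_le_of_sq_le_sq ?_ (by positivity))
  rw [mul_pow, mul_pow, Real.sq_sqrt hn, Real.sq_sqrt (by positivity), ← div_eq_inv_mul,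
    le_div_iff₀' hη, ← mul_assoc]
  exact hre

lemma le_mul_sqrt_mul_sqrt_of_sq_le {n η ε a f u v : ℝ} (hn : 0 < n) (hη : 0 < η) (hε : 0 ≤ ε)
    (hf : 0 ≤ f) (hu : 0 ≤ u) (hbasic : u ^ 2 ≤ ε * (f * v + a * u))
    (hre : η * n * v ^ 2 ≤ u ^ 2) :
    u ≤ ε * √(1 + η⁻¹) * √(a ^ 2 + f ^ 2 / n) := by
  have hn' : 0 < √n := Real.sqrt_pos.2 hn
  have hv : v ≤ √η⁻¹ * (u / √n) := by
    rw [mul_div_assoc', le_div_iff₀ hn', mul_comm]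
    exact sqrt_mul_le_of_mul_sq_le hn.le hη hu hre
  have hcs : a + √η⁻¹ * (f / √n) ≤ √(1 + η⁻¹) * √(a ^ 2 + f ^ 2 / n) := by
    have := add_mul_le_sqrt_one_add_sq_mul_sqrt a (f / √n) √η⁻¹
    rwa [Real.sq_sqrt (by positivity), div_pow, Real.sq_sqrt hn.le] at this
  rcases hu.eq_or_lt with rfl | hu0
  · positivity
  have hfv : f * v ≤ u * (√η⁻¹ * (f / √n)) := by
    calc f * v ≤ f * (√η⁻¹ * (u / √n)) := mul_le_mul_of_nonneg_left hv hf
      _ = u * (√η⁻¹ * (f / √n)) := by ring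
  have : u * u ≤ u * (ε * (a + √η⁻¹ * (f / √n))) := by nlinarith
  calc u ≤ ε * (a + √η⁻¹ * (f / √n)) := le_of_mul_le_mul_left this hu0
    _ ≤ ε * √(1 + η⁻¹) * √(a ^ 2 + f ^ 2 / n) := by
      rw [mul_assoc]; exact mul_le_mul_of_nonneg_left hcs hε

-- Nearly tight at `η = 1/2`, where the left side is `2 + 2√3 + √6 ≈ 7.91`; hence the split at
-- `η⁻¹ = 2` and the decimal bounds on the square roots.
lemma two_add_two_mul_sqrt_add_le (η : ℝ) (hη : 0 < η) :
    2 + 2 * √(1 + η⁻¹) + √(1 + η⁻¹) * √η⁻¹ ≤ 8 * max 1 (2 * η)⁻¹ := by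
  set s := √η⁻¹
  set q := √(1 + η⁻¹)
  have hs : 0 ≤ s := Real.sqrt_nonneg _
  have hq : 0 ≤ q := Real.sqrt_nonneg _
  have hs2 : s ^ 2 = η⁻¹ := Real.sq_sqrt (by positivity)
  have hq2 : q ^ 2 = 1 + s ^ 2 := by rw [hs2]; exact Real.sq_sqrt (by positivity)
  have hmax : (2 * η)⁻¹ = s ^ 2 / 2 := by rw [hs2, mul_inv, div_eq_mul_inv, mul_comm]
  rcases le_total (s ^ 2) 2 with hsmall | hlarge
  · have hq' : q ≤ 1.7321 := by nlinarith
    have hs' : s ≤ 1.41422 := by nlinarith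
    have := le_max_left 1 (2 * η)⁻¹
    nlinarith [mul_le_mul hq' hs' hs (by norm_num)]
  · have hq' : q ≤ 1.2248 * s := by nlinarith
    have hs' : 1.414 ≤ s := by nlinarith
    have := le_max_right 1 (2 * η)⁻¹
    rw [hmax] at this ⊢
    nlinarith [mul_le_mul_of_nonneg_right hq' hs, sq_nonneg (s - 1.414)]

lemma norm_inv_smul_sub_inv_smul_le {E : Type*} [NormedAddCommGroup E] [NormedSpace ℝ E]
    (x y : E) {d₁ d₂ : ℝ} (hd₁ : 0 < d₁) (hd₂ : 0 < d₂) :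
    ‖d₁⁻¹ • x - d₂⁻¹ • y‖ ≤ (‖x - y‖ + |d₁ - d₂| * (‖y‖ / d₂)) / d₁ := by
  have hsplit : d₁⁻¹ • x - d₂⁻¹ • y = d₁⁻¹ • ((x - y) + ((d₂ - d₁) / d₂) • y) := by
    have hc : d₁⁻¹ * ((d₂ - d₁) / d₂) = d₁⁻¹ - d₂⁻¹ := by field_simp
    rw [smul_add, smul_smul, hc]
    module
  rw [hsplit, norm_smul, Real.norm_of_nonneg (by positivity), inv_mul_eq_div]
  gcongr
  refine (norm_add_le _ _).trans_eq ?_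
  rw [norm_smul, Real.norm_eq_abs, abs_div, abs_of_pos hd₂, abs_sub_comm]
  ring

theorem norm_normalized_sub_le {E : Type*} [NormedAddCommGroup E] [NormedSpace ℝ E]
    {F₁ F₂ : E} {n η ε a₁ a₂ u v : ℝ} (hn : 0 < n) (hη : 0 < η) (hε : 0 ≤ ε) (hu : 0 ≤ u)
    (hbasic : u ^ 2 ≤ ε * (‖F₁‖ * v + a₁ * u)) (hre : η * n * v ^ 2 ≤ u ^ 2)
    (hF : ‖F₁ - F₂‖ ≤ u + ε * a₁) (ha : |a₁ - a₂| ≤ v)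
    (hD₁ : 0 < √(a₁ ^ 2 + ‖F₁‖ ^ 2 / n)) (hD₂ : 0 < √(a₂ ^ 2 + ‖F₂‖ ^ 2 / n)) :
    ‖(√(a₁ ^ 2 + ‖F₁‖ ^ 2 / n))⁻¹ • F₁ - (√(a₂ ^ 2 + ‖F₂‖ ^ 2 / n))⁻¹ • F₂‖
      ≤ 8 * max 1 (2 * η)⁻¹ * ε := by
  set D₁ := √(a₁ ^ 2 + ‖F₁‖ ^ 2 / n)
  set D₂ := √(a₂ ^ 2 + ‖F₂‖ ^ 2 / n)
  set q := √(1 + η⁻¹)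
  have hv : 0 ≤ v := (abs_nonneg _).trans ha
  have huD : u ≤ ε * q * D₁ :=
    le_mul_sqrt_mul_sqrt_of_sq_le hn hη hε (norm_nonneg _) hu hbasic hre
  have hvD : √n * v ≤ √η⁻¹ * (ε * q * D₁) :=
    (sqrt_mul_le_of_mul_sq_le hn.le hη hu hre).trans (by gcongr)
  have ha₁ : a₁ ≤ D₁ :=
    (le_abs_self a₁).trans (Real.abs_le_sqrt (le_add_of_nonneg_right (by positivity)))
  have hw : ‖F₁ - F₂‖ ≤ ε * (q + 1) * D₁ := by
    have := mul_le_mul_of_nonneg_left ha₁ hε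
    linarith
  have hD : |D₁ - D₂| ≤ v + ‖F₁ - F₂‖ / √n :=
    (abs_sqrt_sq_add_sq_div_sub_le hn _ _ _ _).trans
      (add_le_add ha (by gcongr; exact abs_norm_sub_norm_le _ _))
  have hF₂ : ‖F₂‖ / D₂ ≤ √n := (div_le_iff₀ hD₂).2 (le_sqrt_mul_sqrt_sq_add_sq_div hn _ _)
  calc ‖D₁⁻¹ • F₁ - D₂⁻¹ • F₂‖
      ≤ (‖F₁ - F₂‖ + |D₁ - D₂| * (‖F₂‖ / D₂)) / D₁ := norm_inv_smul_sub_inv_smul_le _ _ hD₁ hD₂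
    _ ≤ (‖F₁ - F₂‖ + (v + ‖F₁ - F₂‖ / √n) * √n) / D₁ := by gcongr
    _ = (2 * ‖F₁ - F₂‖ + √n * v) / D₁ := by field_simp; ring
    _ ≤ (2 * (ε * (q + 1) * D₁) + √η⁻¹ * (ε * q * D₁)) / D₁ := by gcongr
    _ = (2 + 2 * q + q * √η⁻¹) * ε := by field_simp; ring
    _ ≤ 8 * max 1 (2 * η)⁻¹ * ε :=
      mul_le_mul_of_nonneg_right (two_add_two_mul_sqrt_add_le η hη) hε

lemma sq_norm_le_of_inner_le {W : Type*} [NormedAddCommGroup W] [InnerProductSpace ℝ W]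
    {F₁ F₂ g₁ g₂ k : W} (hF : F₂ = F₁ + g₂ + k) (hle : ⟪F₂, g₂⟫ ≤ ⟪F₁, g₁⟫) :
    ‖g₂‖ ^ 2 ≤ ‖F₁‖ * ‖g₁ - g₂‖ + ‖k‖ * ‖g₂‖ := by
  rw [hF, inner_add_left, inner_add_left, real_inner_self_eq_norm_sq] at hle
  have h₁ := real_inner_le_norm F₁ (g₁ - g₂)
  have h₂ := neg_le_of_abs_le (abs_real_inner_le_norm k g₂)
  rw [inner_sub_right] at h₁
  linarith

section Sparsity

variable {p T : ℕ}

lemma nnzVec_transpose_sub_le (B₁ B₂ : Matrix (Fin p) (Fin T) ℝ) (t : Fin T) :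
    nnzVec ((B₁ - B₂)ᵀ t) ≤ nnzRows B₁ + nnzRows B₂ := by
  classical
  unfold nnzVec nnzRows
  refine (Finset.card_le_card fun j hj => ?_).trans (Finset.card_union_le _ _)
  simp only [Finset.mem_filter, Finset.mem_univ, true_and, Finset.mem_union] at hj ⊢
  by_contra! h
  simp [h.1, h.2] at hj

lemma mul_sq_norm_flat_le_of_restricted_eigenvalue {a c : Type*} [Fintype a] [Fintype c]
    {X : Matrix a (Fin p) ℝ} {S : Matrix c (Fin p) ℝ} {κ k : ℝ}
    (hre : ∀ b : Fin p → ℝ, b ≠ 0 → (nnzVec b : ℝ) ≤ k →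
      κ * (∑ i, (S.mulVec b i) ^ 2) < ∑ i, (X.mulVec b i) ^ 2)
    {Δ : Matrix (Fin p) (Fin T) ℝ} (hΔ : ∀ t, (nnzVec (Δᵀ t) : ℝ) ≤ k) :
    κ * ‖flat (S * Δ)‖ ^ 2 ≤ ‖flat (X * Δ)‖ ^ 2 := by
  rw [norm_flat_sq_eq_sum_col, norm_flat_sq_eq_sum_col, Finset.mul_sum]
  refine Finset.sum_le_sum fun t _ => ?_
  rw [transpose_mul_apply_eq_mulVec, transpose_mul_apply_eq_mulVec, norm_toLp_sq, norm_toLp_sq]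
  by_cases h : Δᵀ t = 0
  · simp [h]
  · exact (hre _ h (hΔ t)).le

end Sparsity

section LassoLipschitz

variable {n p T : ℕ} {Sig : Matrix (Fin p) (Fin p) ℝ} {Bstar : Matrix (Fin p) (Fin T) ℝ}
  {E : Matrix (Fin n) (Fin T) ℝ}

lemma Fz_eq_Fz_add (Z Zb : Matrix (Fin n) (Fin p) ℝ) (B₁ B₂ : Matrix (Fin p) (Fin T) ℝ) :
    Fz Sig Bstar E Zb B₂ = Fz Sig Bstar E Z B₁ + Zb * matSqrt Sig * (B₁ - B₂)
      + (Z - Zb) * herr Sig Bstar B₁ := by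
  simp only [Fz, herr, Matrix.mul_sub, Matrix.sub_mul, Matrix.mul_assoc]
  abel

lemma herr_sub_herr (B₁ B₂ : Matrix (Fin p) (Fin T) ℝ) :
    herr Sig Bstar B₁ - herr Sig Bstar B₂ = matSqrt Sig * (B₁ - B₂) := by
  simp only [herr, Matrix.mul_sub]
  abel

theorem norm_flat_normalized_Fz_sub_le (hn : 0 < n) {lam c η : ℝ} (hlam : 0 ≤ lam) (hη : 0 < η)
    {Z Zb : Matrix (Fin n) (Fin p) ℝ} {B₁ B₂ : Matrix (Fin p) (Fin T) ℝ}
    (h₁ : ∀ B, objective n lam 0 (Z * matSqrt Sig * Bstar + E) (Z * matSqrt Sig) B₁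
        ≤ objective n lam 0 (Z * matSqrt Sig * Bstar + E) (Z * matSqrt Sig) B)
    (h₂ : ∀ B, objective n lam 0 (Zb * matSqrt Sig * Bstar + E) (Zb * matSqrt Sig) B₂
        ≤ objective n lam 0 (Zb * matSqrt Sig * Bstar + E) (Zb * matSqrt Sig) B)
    (hD₁ : 0 < Dz Sig Bstar E Z B₁) (hD₂ : 0 < Dz Sig Bstar E Zb B₂)
    (hsp₁ : (nnzRows B₁ : ℝ) ≤ (n : ℝ) * (1 - c) / 2)
    (hsp₂ : (nnzRows B₂ : ℝ) ≤ (n : ℝ) * (1 - c) / 2)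
    (hre : ∀ b : Fin p → ℝ, b ≠ 0 → (nnzVec b : ℝ) ≤ (1 - c) * (n : ℝ) →
        η * (n : ℝ) * (∑ i, ((matSqrt Sig).mulVec b i) ^ 2)
          < ∑ i, ((Zb * matSqrt Sig).mulVec b i) ^ 2) :
    ‖flat ((Dz Sig Bstar E Z B₁)⁻¹ • Fz Sig Bstar E Z B₁
        - (Dz Sig Bstar E Zb B₂)⁻¹ • Fz Sig Bstar E Zb B₂)‖
      ≤ 8 * max 1 (2 * η)⁻¹ * opNorm (Z - Zb) := by
  set S := matSqrt Sig
  set ε := opNorm (Z - Zb)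
  set H₁ := herr Sig Bstar B₁
  set F₁ := Fz Sig Bstar E Z B₁
  set F₂ := Fz Sig Bstar E Zb B₂
  set Δ := B₁ - B₂
  have hF : flat F₂ = flat F₁ + flat (Zb * S * Δ) + flat ((Z - Zb) * H₁) := by
    rw [← map_add, ← map_add]
    exact congrArg flat (Fz_eq_Fz_add Z Zb B₁ B₂)
  have hH : ‖flat ((Z - Zb) * H₁)‖ ≤ ε * ‖flat H₁‖ := norm_flat_mul_le _ _
  have hbasic : ‖flat (Zb * S * Δ)‖ ^ 2
      ≤ ε * (‖flat F₁‖ * ‖flat (S * Δ)‖ + ‖flat H₁‖ * ‖flat (Zb * S * Δ)‖) := by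
    have hdiff : flat (Z * S * Δ) - flat (Zb * S * Δ) = flat ((Z - Zb) * (S * Δ)) := by
      rw [← map_sub, Matrix.mul_assoc, Matrix.mul_assoc, ← Matrix.sub_mul]
    have hle := sq_norm_le_of_inner_le hF (inner_le_inner_of_lasso_minimizers hn hlam h₁ h₂)
    have hSΔ := norm_flat_mul_le (Z - Zb) (S * Δ)
    rw [hdiff] at hle
    calc _ ≤ ‖flat F₁‖ * (ε * ‖flat (S * Δ)‖) + ε * ‖flat H₁‖ * ‖flat (Zb * S * Δ)‖ := by
          refine hle.trans ?_
          gcongr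
      _ = _ := by ring
  have hRE : η * n * ‖flat (S * Δ)‖ ^ 2 ≤ ‖flat (Zb * S * Δ)‖ ^ 2 :=
    mul_sq_norm_flat_le_of_restricted_eigenvalue hre fun t => by
      have : (nnzVec (Δᵀ t) : ℝ) ≤ nnzRows B₁ + nnzRows B₂ := by
        exact_mod_cast nnzVec_transpose_sub_le B₁ B₂ t
      linarith
  have hw : ‖flat F₁ - flat F₂‖ ≤ ‖flat (Zb * S * Δ)‖ + ε * ‖flat H₁‖ := by
    rw [show flat F₁ - flat F₂ = -(flat (Zb * S * Δ) + flat ((Z - Zb) * H₁)) by rw [hF]; abel,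
      norm_neg]
    exact (norm_add_le _ _).trans (by gcongr)
  have ha : |‖flat H₁‖ - ‖flat (herr Sig Bstar B₂)‖| ≤ ‖flat (S * Δ)‖ := by
    rw [← herr_sub_herr, map_sub]
    exact abs_norm_sub_norm_le _ _
  simp only [Dz, frob_eq_norm_flat] at hD₁ hD₂ ⊢
  rw [map_sub, map_smul, map_smul]
  exact norm_normalized_sub_le (Nat.cast_pos.2 hn) hη (norm_nonneg _) (norm_nonneg _) hbasic hRE
    hw ha hD₁ hD₂

end LassoLipschitz

lemma opNorm_normalized_gram_sub_le {n p q : ℕ} (hn : 0 < n) {Z Zb : Matrix (Fin n) (Fin p) ℝ}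
    {F₁ F₂ : Matrix (Fin n) (Fin q) ℝ} {D₁ D₂ K : ℝ} (hD₂ : 0 < D₂)
    (hG : ‖flat (D₁⁻¹ • F₁ - D₂⁻¹ • F₂)‖ ≤ K * opNorm (Z - Zb))
    (hF₂ : ‖flat F₂‖ ≤ √n * D₂) (hZ : opNorm Z ≤ 2 * √n + √p) :
    opNorm (((n : ℝ)⁻¹ * D₁⁻¹) • (Zᵀ * F₁) - ((n : ℝ)⁻¹ * D₂⁻¹) • (Zbᵀ * F₂))
      ≤ (√n)⁻¹ * (1 + (2 + √((p : ℝ) / n)) * K) * opNorm (Z - Zb) := by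
  have hrw : ((n : ℝ)⁻¹ * D₁⁻¹) • (Zᵀ * F₁) - ((n : ℝ)⁻¹ * D₂⁻¹) • (Zbᵀ * F₂)
      = (n : ℝ)⁻¹ • (Zᵀ * (D₁⁻¹ • F₁) - Zbᵀ * (D₂⁻¹ • F₂)) := by
    simp only [Matrix.mul_smul, smul_smul, smul_sub]
  have hG₂ : ‖flat (D₂⁻¹ • F₂)‖ ≤ √n := by
    rw [map_smul, norm_smul, Real.norm_of_nonneg (inv_nonneg.2 hD₂.le), inv_mul_le_iff₀ hD₂,
      mul_comm]
    exact hF₂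
  have hε := opNorm_nonneg (Z - Zb)
  rw [hrw, opNorm_smul, abs_of_pos (by positivity)]
  calc (n : ℝ)⁻¹ * opNorm (Zᵀ * (D₁⁻¹ • F₁) - Zbᵀ * (D₂⁻¹ • F₂))
      ≤ (n : ℝ)⁻¹ * ((2 * √n + √p) * (K * opNorm (Z - Zb)) + opNorm (Z - Zb) * √n) := by
        gcongr
        refine (opNorm_transpose_mul_sub_le _ _ _ _).trans ?_
        gcongr
    _ = (√n)⁻¹ * (1 + (2 + √((p : ℝ) / n)) * K) * opNorm (Z - Zb) := by
        have hsq : √(n : ℝ) ^ 2 = n := Real.sq_sqrt (Nat.cast_nonneg n)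
        rw [Real.sqrt_div' _ (Nat.cast_nonneg n)]
        field_simp
        linear_combination (opNorm (Z - Zb) * √p * K + √n * opNorm (Z - Zb)
          + 2 * √n * opNorm (Z - Zb) * K) * hsq

theorem statement_13_general (n p T : ℕ) (hn : 0 < n)
    (Sig : Matrix (Fin p) (Fin p) ℝ)
    (Bstar : Matrix (Fin p) (Fin T) ℝ) (E : Matrix (Fin n) (Fin T) ℝ)
    (lam : ℝ) (hlam : 0 ≤ lam) (c η : ℝ) (hη : 0 < η)
    (Z Zb : Matrix (Fin n) (Fin p) ℝ) (B1 B2 : Matrix (Fin p) (Fin T) ℝ)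
    (h1 : ∀ B, objective n lam 0 (Z * matSqrt Sig * Bstar + E) (Z * matSqrt Sig) B1
        ≤ objective n lam 0 (Z * matSqrt Sig * Bstar + E) (Z * matSqrt Sig) B)
    (h2 : ∀ B, objective n lam 0 (Zb * matSqrt Sig * Bstar + E) (Zb * matSqrt Sig) B2
        ≤ objective n lam 0 (Zb * matSqrt Sig * Bstar + E) (Zb * matSqrt Sig) B)
    (hD1 : 0 < Dz Sig Bstar E Z B1) (hD2 : 0 < Dz Sig Bstar E Zb B2)
    (hsp1 : (nnzRows B1 : ℝ) ≤ (n : ℝ) * (1 - c) / 2)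
    (hsp2 : (nnzRows B2 : ℝ) ≤ (n : ℝ) * (1 - c) / 2)
    (hre2 : ∀ b : Fin p → ℝ, b ≠ 0 → (nnzVec b : ℝ) ≤ (1 - c) * (n : ℝ) →
        η * (n : ℝ) * (∑ i, ((matSqrt Sig).mulVec b i) ^ 2)
          < ∑ i, ((Zb * matSqrt Sig).mulVec b i) ^ 2) :
    ((Real.sqrt (n : ℝ))⁻¹ *
        frob ((Dz Sig Bstar E Z B1)⁻¹ • Fz Sig Bstar E Z B1
          - (Dz Sig Bstar E Zb B2)⁻¹ • Fz Sig Bstar E Zb B2)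
      ≤ (Real.sqrt (n : ℝ))⁻¹ * (8 * max 1 (2 * η)⁻¹) * opNorm (Z - Zb)) ∧
    (opNorm Z < 2 * Real.sqrt (n : ℝ) + Real.sqrt (p : ℝ) →
      opNorm Zb < 2 * Real.sqrt (n : ℝ) + Real.sqrt (p : ℝ) →
      opNorm (((n : ℝ)⁻¹ * (Dz Sig Bstar E Z B1)⁻¹) • (Zᵀ * Fz Sig Bstar E Z B1)
          - ((n : ℝ)⁻¹ * (Dz Sig Bstar E Zb B2)⁻¹) • (Zbᵀ * Fz Sig Bstar E Zb B2))
        ≤ (Real.sqrt (n : ℝ))⁻¹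
            * (1 + (2 + Real.sqrt ((p : ℝ) / (n : ℝ))) * (8 * max 1 (2 * η)⁻¹))
            * opNorm (Z - Zb)) := by
  have hF := norm_flat_normalized_Fz_sub_le hn hlam hη h1 h2 hD1 hD2 hsp1 hsp2 hre2
  refine ⟨?_, fun hZ _ => opNorm_normalized_gram_sub_le hn hD2 hF ?_ hZ.le⟩
  · rw [frob_eq_norm_flat, mul_assoc]
    exact mul_le_mul_of_nonneg_left hF (by positivity)
  · rw [Dz, frob_eq_norm_flat, frob_eq_norm_flat]
    exact le_sqrt_mul_sqrt_sq_add_sq_div (Nat.cast_pos.2 hn) _ _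

/-- Lemma: Lipschitz properties for the multi-task group Lasso,
`τ = 0`, on the sparsity/restricted-eigenvalue events. -/
theorem statement_13 (n p T : ℕ) (hn : 0 < n)
    (Sig : Matrix (Fin p) (Fin p) ℝ) (hSig : Sig.PosDef)
    (Bstar : Matrix (Fin p) (Fin T) ℝ) (E : Matrix (Fin n) (Fin T) ℝ)
    (lam : ℝ) (hlam : 0 ≤ lam) (c η : ℝ) (hc0 : 0 < c) (hc1 : c < 1) (hη : 0 < η)
    (Z Zb : Matrix (Fin n) (Fin p) ℝ) (B1 B2 : Matrix (Fin p) (Fin T) ℝ)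
    (h1 : ∀ B, objective n lam 0 (Z * matSqrt Sig * Bstar + E) (Z * matSqrt Sig) B1
        ≤ objective n lam 0 (Z * matSqrt Sig * Bstar + E) (Z * matSqrt Sig) B)
    (h2 : ∀ B, objective n lam 0 (Zb * matSqrt Sig * Bstar + E) (Zb * matSqrt Sig) B2
        ≤ objective n lam 0 (Zb * matSqrt Sig * Bstar + E) (Zb * matSqrt Sig) B)
    (hD1 : 0 < Dz Sig Bstar E Z B1) (hD2 : 0 < Dz Sig Bstar E Zb B2)
    (hsp1 : (nnzRows B1 : ℝ) ≤ (n : ℝ) * (1 - c) / 2)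
    (hsp2 : (nnzRows B2 : ℝ) ≤ (n : ℝ) * (1 - c) / 2)
    (hre1 : ∀ b : Fin p → ℝ, b ≠ 0 → (nnzVec b : ℝ) ≤ (1 - c) * (n : ℝ) →
        η * (n : ℝ) * (∑ i, ((matSqrt Sig).mulVec b i) ^ 2)
          < ∑ i, ((Z * matSqrt Sig).mulVec b i) ^ 2)
    (hre2 : ∀ b : Fin p → ℝ, b ≠ 0 → (nnzVec b : ℝ) ≤ (1 - c) * (n : ℝ) →
        η * (n : ℝ) * (∑ i, ((matSqrt Sig).mulVec b i) ^ 2)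
          < ∑ i, ((Zb * matSqrt Sig).mulVec b i) ^ 2) :
    ((Real.sqrt (n : ℝ))⁻¹ *
        frob ((Dz Sig Bstar E Z B1)⁻¹ • Fz Sig Bstar E Z B1
          - (Dz Sig Bstar E Zb B2)⁻¹ • Fz Sig Bstar E Zb B2)
      ≤ (Real.sqrt (n : ℝ))⁻¹ * (8 * max 1 (2 * η)⁻¹) * opNorm (Z - Zb)) ∧
    (opNorm Z < 2 * Real.sqrt (n : ℝ) + Real.sqrt (p : ℝ) →
      opNorm Zb < 2 * Real.sqrt (n : ℝ) + Real.sqrt (p : ℝ) →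
      opNorm (((n : ℝ)⁻¹ * (Dz Sig Bstar E Z B1)⁻¹) • (Zᵀ * Fz Sig Bstar E Z B1)
          - ((n : ℝ)⁻¹ * (Dz Sig Bstar E Zb B2)⁻¹) • (Zbᵀ * Fz Sig Bstar E Zb B2))
        ≤ (Real.sqrt (n : ℝ))⁻¹
            * (1 + (2 + Real.sqrt ((p : ℝ) / (n : ℝ))) * (8 * max 1 (2 * η)⁻¹))
            * opNorm (Z - Zb)) :=
  statement_13_general n p T hn Sig Bstar E lam hlam c η hη Z Zb B1 B2 h1 h2 hD1 hD2 hsp1 hsp2 hre2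

end MTS
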